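/- arXiv:2206.09447 — 6 statements merged into one kernel-verified Lean document; each statement's English description precedes it below -/
import Mathlib

section
/- Let L_A be the (4n+1)×(4n+1) real tridiagonal matrix with diagonal entries (2,4,4,...,4,2) and all sub/super-diagonal entries equal to -2. Then the sum of the reciprocals of the nonzero eigenvalues of L_A equals n(4n+2)/3. -/
/-!
If `A` is Hermitian, `A 1 = 0`, its kernel is spanned by `1`, and `A K = 1 - e 1ᵀ`, then
`∑ λ⁻¹ = tr K - (∑ᵢⱼ Kᵢⱼ) / N`, the sum running over all eigenvalues with `0⁻¹ = 0`. With
`P = 1 - 1 1ᵀ / N`, a unit eigenvector `u` satisfies `⟪u, K P u⟫ = λ⁻¹`: if `λ = 0` then `u` is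
constant and `P u = 0`, and otherwise `P u = u` and `λ ⟪u, K P u⟫ = ⟪A u, K P u⟫ = ⟪u, P u⟫ = 1`.
Summing over an orthonormal eigenbasis gives `tr (K P)`.

`L_A` is twice the Laplacian of the path on `N = 4n + 1` vertices, and the Green's function
grounded at the first vertex, `Kᵢⱼ = min(i, j) / 2`, has `L_A K = 1 - e₀ 1ᵀ`. Then
`tr K - (∑ᵢⱼ Kᵢⱼ) / N = N(N - 1)/4 - (N - 1)(2N - 1)/12 = (N² - 1)/12 = n(4n + 2)/3`.
-/

/-- The `(4n+1) × (4n+1)` tridiagonal matrix `L_A` with diagonal `(2,4,4,...,4,2)`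
and all sub/super-diagonal entries `-2`. -/
def matLA (n : ℕ) : Matrix (Fin (4 * n + 1)) (Fin (4 * n + 1)) ℝ := fun i j =>
  if i = j then (if i.val = 0 ∨ i.val = 4 * n then 2 else 4)
  else if i.val + 1 = j.val ∨ j.val + 1 = i.val then -2 else 0

open Finset Matrix

theorem Fintype.sum_eq_add_add {M ι : Type*} [AddCommMonoid M] [Fintype ι] {f : ι → M}
    (a b c : ι) (hab : a ≠ b) (hac : a ≠ c) (hbc : b ≠ c)
    (h : ∀ j, j ≠ a → j ≠ b → j ≠ c → f j = 0) : ∑ j, f j = f a + f b + f c := by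
  classical
  rw [← Finset.sum_subset (subset_univ {a, b, c}) fun j _ hj => by simp_all,
    sum_insert (by simp [hab, hac]), sum_pair hbc, add_assoc]

section

variable {𝕜 ι : Type*} [RCLike 𝕜] [Fintype ι] [DecidableEq ι]

theorem Matrix.trace_eq_sum_star_dotProduct_mulVec (M : Matrix ι ι 𝕜)
    (b : OrthonormalBasis ι 𝕜 (EuclideanSpace 𝕜 ι)) :
    M.trace = ∑ k, star ⇑(b k) ⬝ᵥ (M *ᵥ ⇑(b k)) := by
  have h := LinearMap.trace_eq_sum_inner (toLpLin 2 2 M) b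
  rw [toLpLin_eq_toLin, LinearMap.trace_eq_matrix_trace 𝕜 (PiLp.basisFun 2 𝕜 ι),
    LinearMap.toMatrix_toLin] at h
  rw [h]
  refine Fintype.sum_congr _ _ fun k => ?_
  rw [EuclideanSpace.inner_eq_star_dotProduct, dotProduct_comm]
  rfl

namespace Matrix.IsHermitian

variable {A K P : Matrix ι ι 𝕜} (hA : A.IsHermitian)
include hA

theorem star_eigenvectorBasis_dotProduct_mulVec_eq_inv (hPA : P * A = A)
    (hker : ∀ v, A *ᵥ v = 0 → P *ᵥ v = 0) (hAKP : A * K * P = P) (k : ι) :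
    star ⇑(hA.eigenvectorBasis k) ⬝ᵥ (K * P) *ᵥ ⇑(hA.eigenvectorBasis k) =
      ((hA.eigenvalues k)⁻¹ : ℝ) := by
  set u := ⇑(hA.eigenvectorBasis k)
  set μ := hA.eigenvalues k
  have hAu : A *ᵥ u = (μ : 𝕜) • u := by
    rw [hA.mulVec_eigenvectorBasis, RCLike.real_smul_eq_coe_smul (K := 𝕜)]
  have hu : star u ⬝ᵥ u = 1 := by
    rw [dotProduct_comm, ← EuclideanSpace.inner_eq_star_dotProduct,
      hA.eigenvectorBasis.inner_eq_ite, if_pos rfl]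
  by_cases hμ : μ = 0
  · have hPu : P *ᵥ u = 0 := hker u (by rw [hAu, hμ, RCLike.ofReal_zero, zero_smul])
    rw [← mulVec_mulVec, hPu, mulVec_zero, dotProduct_zero, hμ, _root_.inv_zero,
      RCLike.ofReal_zero]
  · have hμ' : (μ : 𝕜) ≠ 0 := RCLike.ofReal_ne_zero.mpr hμ
    have hPu : P *ᵥ u = u := by
      have : (μ : 𝕜) • P *ᵥ u = (μ : 𝕜) • u := by
        rw [← mulVec_smul, ← hAu, mulVec_mulVec, hPA]
      exact smul_right_injective _ hμ' this
    have key : (μ : 𝕜) * (star u ⬝ᵥ (K * P) *ᵥ u) = 1 := by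
      calc (μ : 𝕜) * (star u ⬝ᵥ (K * P) *ᵥ u)
          = star (A *ᵥ u) ⬝ᵥ (K * P) *ᵥ u := by
            rw [hAu, star_smul, smul_dotProduct, RCLike.star_def, RCLike.conj_ofReal, smul_eq_mul]
        _ = star u ⬝ᵥ (A * K * P) *ᵥ u := by
            rw [star_mulVec, hA.eq, ← dotProduct_mulVec, mulVec_mulVec, ← mul_assoc]
        _ = 1 := by rw [hAKP, hPu, hu]
    rw [RCLike.ofReal_inv]
    exact eq_inv_of_mul_eq_one_left (by rw [mul_comm, key])

theorem sum_inv_eigenvalues_eq_trace_mul (hPA : P * A = A)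
    (hker : ∀ v, A *ᵥ v = 0 → P *ᵥ v = 0) (hAKP : A * K * P = P) :
    ((∑ i, (hA.eigenvalues i)⁻¹ : ℝ) : 𝕜) = (K * P).trace := by
  rw [trace_eq_sum_star_dotProduct_mulVec _ hA.eigenvectorBasis, RCLike.ofReal_sum]
  exact Fintype.sum_congr _ _ fun k =>
    (hA.star_eigenvectorBasis_dotProduct_mulVec_eq_inv hPA hker hAKP k).symm

theorem sum_inv_eigenvalues_eq_trace_sub [Nonempty ι] {e : ι → 𝕜} (hA1 : A *ᵥ 1 = 0)
    (hker : ∀ v, A *ᵥ v = 0 → ∃ c : 𝕜, v = c • 1) (hAK : A * K = 1 - vecMulVec e 1) :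
    ((∑ i, (hA.eigenvalues i)⁻¹ : ℝ) : 𝕜) = K.trace - (∑ i, ∑ j, K i j) / Fintype.card ι := by
  have hN : (Fintype.card ι : 𝕜) ≠ 0 := Nat.cast_ne_zero.mpr Fintype.card_ne_zero
  set P : Matrix ι ι 𝕜 := 1 - (Fintype.card ι : 𝕜)⁻¹ • vecMulVec 1 1
  have h1A : (1 : ι → 𝕜) ᵥ* A = 0 := by
    apply star_injective
    rw [star_vecMul, hA.eq, star_one, hA1, star_zero]
  have h1P : (1 : ι → 𝕜) ᵥ* P = 0 := by
    rw [vecMul_sub, vecMul_one, vecMul_smul, vecMul_vecMulVec, one_dotProduct_one, smul_smul,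
      inv_mul_cancel₀ hN, one_smul, sub_self]
  have hP1 : P *ᵥ 1 = 0 := by
    rw [sub_mulVec, one_mulVec, smul_mulVec, vecMulVec_mulVec, one_dotProduct_one,
      op_smul_eq_smul, smul_smul, inv_mul_cancel₀ hN, one_smul, sub_self]
  have hPA : P * A = A := by
    rw [sub_mul, one_mul, smul_mul, vecMulVec_mul, h1A, vecMulVec_zero, smul_zero, sub_zero]
  have hkerP : ∀ v, A *ᵥ v = 0 → P *ᵥ v = 0 := by
    intro v hv
    obtain ⟨c, rfl⟩ := hker v hv
    rw [mulVec_smul, hP1, smul_zero]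
  have hAKP : A * K * P = P := by
    rw [hAK, sub_mul, one_mul, vecMulVec_mul, h1P, vecMulVec_zero, sub_zero]
  rw [hA.sum_inv_eigenvalues_eq_trace_mul hPA hkerP hAKP, mul_sub, mul_one, Matrix.mul_smul,
    trace_sub, trace_smul, mul_vecMulVec, trace_vecMulVec, dotProduct_one, smul_eq_mul,
    div_eq_inv_mul]
  simp only [mulVec, dotProduct_one]

end Matrix.IsHermitian

end

def minMatrix (N : ℕ) : Matrix (Fin N) (Fin N) ℝ := of fun i j => ((min i.val j.val : ℕ) : ℝ)

theorem Nat.cast_min_succ_sub_cast_min {R : Type*} [AddCommGroupWithOne R] (m c : ℕ) :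
    ((min (m + 1) c : ℕ) : R) - (min m c : ℕ) = if m < c then 1 else 0 := by
  split_ifs with h
  · rw [Nat.min_eq_left h, Nat.min_eq_left h.le, Nat.cast_succ, add_sub_cancel_left]
  · rw [Nat.min_eq_right (by omega), Nat.min_eq_right (by omega), sub_self]

theorem two_mul_sum_range_natCast {R : Type*} [CommRing R] (N : ℕ) :
    2 * ∑ i ∈ range N, (i : R) = N * (N - 1) := by
  induction N with
  | zero => simp
  | succ N ih =>
    rw [sum_range_succ, mul_add, ih]
    push_cast
    ring

theorem six_mul_sum_range_sum_range_min {R : Type*} [CommRing R] (N : ℕ) :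
    6 * ∑ i ∈ range N, ∑ j ∈ range N, ((min i j : ℕ) : R) = (N - 1) * N * (2 * N - 1) := by
  induction N with
  | zero => simp
  | succ N ih =>
    have hrow : ∑ i ∈ range N, ((min i N : ℕ) : R) = ∑ i ∈ range N, (i : R) :=
      sum_congr rfl fun i hi => by rw [Nat.min_eq_left (mem_range.mp hi).le]
    have hcol : ∑ j ∈ range N, ((min N j : ℕ) : R) = ∑ j ∈ range N, (j : R) :=
      sum_congr rfl fun j hj => by rw [Nat.min_eq_right (mem_range.mp hj).le]
    rw [sum_range_succ, sum_range_succ, hcol]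
    simp only [sum_range_succ, sum_add_distrib, hrow, min_self]
    have := two_mul_sum_range_natCast (R := R) N
    push_cast
    linear_combination ih + 6 * this

theorem two_mul_trace_minMatrix (N : ℕ) : 2 * (minMatrix N).trace = N * (N - 1) := by
  simp only [Matrix.trace, Matrix.diag, minMatrix, of_apply, min_self]
  rw [Fin.sum_univ_eq_sum_range (fun i => (i : ℝ)), two_mul_sum_range_natCast]

theorem six_mul_sum_minMatrix (N : ℕ) :
    6 * ∑ i, ∑ j, minMatrix N i j = (N - 1) * N * (2 * N - 1) := by
  have hrow (i : ℕ) : ∑ j : Fin N, ((min i j : ℕ) : ℝ) = ∑ j ∈ range N, ((min i j : ℕ) : ℝ) :=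
    Fin.sum_univ_eq_sum_range (fun j => ((min i j : ℕ) : ℝ)) N
  simp only [minMatrix, of_apply, hrow]
  rw [Fin.sum_univ_eq_sum_range (fun i => ∑ j ∈ range N, ((min i j : ℕ) : ℝ)),
    six_mul_sum_range_sum_range_min]

section

variable {n : ℕ}

theorem matLA_apply_self_of_end {k : ℕ} (hk : k < 4 * n + 1) (h : k = 0 ∨ k = 4 * n) :
    matLA n ⟨k, hk⟩ ⟨k, hk⟩ = 2 := by
  rw [matLA, if_pos rfl, if_pos h]

theorem matLA_apply_self_of_interior {k : ℕ} (hk : k < 4 * n + 1) (h0 : k ≠ 0) (h1 : k ≠ 4 * n) :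
    matLA n ⟨k, hk⟩ ⟨k, hk⟩ = 4 := by
  rw [matLA, if_pos rfl, if_neg (by dsimp only; omega)]

theorem matLA_apply_of_adjacent {k l : ℕ} (hk : k < 4 * n + 1) (hl : l < 4 * n + 1)
    (h : k + 1 = l ∨ l + 1 = k) : matLA n ⟨k, hk⟩ ⟨l, hl⟩ = -2 := by
  rw [matLA, if_neg (by simp only [Fin.ext_iff]; omega), if_pos h]

theorem matLA_apply_of_far {k : ℕ} (hk : k < 4 * n + 1) (j : Fin (4 * n + 1))
    (h : k + 1 < j.val ∨ j.val + 1 < k) : matLA n ⟨k, hk⟩ j = 0 := by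
  rw [matLA, if_neg (by simp only [Fin.ext_iff]; omega),
    if_neg (by dsimp only; omega)]

theorem matLA_mulVec_apply_zero (hn : 0 < n) (x : Fin (4 * n + 1) → ℝ) :
    (matLA n *ᵥ x) ⟨0, by omega⟩ = 2 * x ⟨0, by omega⟩ - 2 * x ⟨1, by omega⟩ := by
  rw [mulVec, dotProduct, Fintype.sum_eq_add ⟨0, by omega⟩ ⟨1, by omega⟩ (by simp [Fin.ext_iff]),
    matLA_apply_self_of_end _ (Or.inl rfl), matLA_apply_of_adjacent _ _ (Or.inl rfl)]
  · ring
  intro j hj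
  simp only [ne_eq, Fin.ext_iff] at hj
  rw [matLA_apply_of_far _ _ (by omega), zero_mul]

theorem matLA_mulVec_apply_succ (k : ℕ) (hk : k + 2 ≤ 4 * n) (x : Fin (4 * n + 1) → ℝ) :
    (matLA n *ᵥ x) ⟨k + 1, by omega⟩ =
      -2 * x ⟨k, by omega⟩ + 4 * x ⟨k + 1, by omega⟩ - 2 * x ⟨k + 2, by omega⟩ := by
  rw [mulVec, dotProduct, Fintype.sum_eq_add_add ⟨k, by omega⟩ ⟨k + 1, by omega⟩ ⟨k + 2, by omega⟩
    (by simp [Fin.ext_iff]) (by simp [Fin.ext_iff]) (by simp [Fin.ext_iff]),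
    matLA_apply_of_adjacent _ _ (Or.inr rfl), matLA_apply_self_of_interior _ (by omega) (by omega),
    matLA_apply_of_adjacent _ _ (Or.inl rfl)]
  · ring
  intro j h0 h1 h2
  simp only [ne_eq, Fin.ext_iff] at h0 h1 h2
  rw [matLA_apply_of_far _ _ (by omega), zero_mul]

theorem matLA_mulVec_apply_last (k : ℕ) (hk : k + 1 = 4 * n) (x : Fin (4 * n + 1) → ℝ) :
    (matLA n *ᵥ x) ⟨k + 1, by omega⟩ = -2 * x ⟨k, by omega⟩ + 2 * x ⟨k + 1, by omega⟩ := by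
  rw [mulVec, dotProduct,
    Fintype.sum_eq_add ⟨k, by omega⟩ ⟨k + 1, by omega⟩ (by simp [Fin.ext_iff]),
    matLA_apply_of_adjacent _ _ (Or.inr rfl), matLA_apply_self_of_end _ (Or.inr hk)]
  intro j hj
  simp only [ne_eq, Fin.ext_iff] at hj
  have := j.isLt
  rw [matLA_apply_of_far _ _ (by omega), zero_mul]

theorem matLA_mulVec_one (hn : 0 < n) : matLA n *ᵥ 1 = 0 := by
  ext ⟨_ | k, hk⟩
  · rw [matLA_mulVec_apply_zero hn]
    norm_num
  · rcases (by omega : k + 2 ≤ 4 * n ∨ k + 1 = 4 * n) with hk' | hk'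
    · rw [matLA_mulVec_apply_succ k hk']
      norm_num
    · rw [matLA_mulVec_apply_last k hk']
      norm_num

theorem matLA_mulVec_eq_zero (hn : 0 < n) {v : Fin (4 * n + 1) → ℝ} (hv : matLA n *ᵥ v = 0) :
    ∃ c : ℝ, v = c • 1 := by
  have step : ∀ k (hk : k < 4 * n), v ⟨k + 1, by omega⟩ = v ⟨k, by omega⟩ := by
    intro k
    induction k with
    | zero =>
      intro _
      have h0 := congrFun hv ⟨0, by omega⟩
      rw [matLA_mulVec_apply_zero hn, Pi.zero_apply] at h0
      linarith
    | succ k ih =>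
      intro hk
      have hk1 := congrFun hv ⟨k + 1, by omega⟩
      rw [matLA_mulVec_apply_succ k (by omega), Pi.zero_apply] at hk1
      linarith [ih (by omega)]
  refine ⟨v ⟨0, by omega⟩, funext fun ⟨k, hk⟩ => ?_⟩
  rw [Pi.smul_apply, Pi.one_apply, smul_eq_mul, mul_one]
  induction k with
  | zero => rfl
  | succ k ih => rw [step k (by omega), ih (by omega)]

theorem matLA_mulVec_min (hn : 0 < n) (c : Fin (4 * n + 1)) :
    matLA n *ᵥ (fun m => ((min m.val c.val : ℕ) : ℝ)) =
      (2 : ℝ) • (Pi.single c 1 - Pi.single 0 1) := by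
  obtain ⟨c, hc⟩ := c
  ext ⟨_ | k, hk⟩
  · rw [matLA_mulVec_apply_zero hn]
    have h0 : ((min 1 c : ℕ) : ℝ) - (min 0 c : ℕ) = if 0 < c then 1 else 0 :=
      Nat.cast_min_succ_sub_cast_min 0 c
    simp only [Pi.smul_apply, Pi.sub_apply, Pi.single_apply, Fin.ext_iff, Fin.val_zero, smul_eq_mul]
    split_ifs at h0 ⊢ <;> first | omega | linarith
  · rcases (by omega : k + 2 ≤ 4 * n ∨ k + 1 = 4 * n) with hk' | hk'
    · rw [matLA_mulVec_apply_succ k hk']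
      have h0 := Nat.cast_min_succ_sub_cast_min (R := ℝ) k c
      have h1 : ((min (k + 2) c : ℕ) : ℝ) - (min (k + 1) c : ℕ) = if k + 1 < c then 1 else 0 :=
        Nat.cast_min_succ_sub_cast_min (k + 1) c
      simp only [Pi.smul_apply, Pi.sub_apply, Pi.single_apply, Fin.ext_iff, Fin.val_zero,
        Nat.add_one_ne_zero, if_false, smul_eq_mul]
      split_ifs at h0 h1 ⊢ <;> first | omega | linarith
    · rw [matLA_mulVec_apply_last k hk']
      have h0 := Nat.cast_min_succ_sub_cast_min (R := ℝ) k c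
      simp only [Pi.smul_apply, Pi.sub_apply, Pi.single_apply, Fin.ext_iff, Fin.val_zero,
        Nat.add_one_ne_zero, if_false, smul_eq_mul]
      split_ifs at h0 ⊢ <;> first | omega | linarith

theorem matLA_mul_minMatrix (hn : 0 < n) :
    matLA n * minMatrix (4 * n + 1) = (2 : ℝ) • (1 - vecMulVec (Pi.single 0 1) 1) := by
  ext i j
  have hcol := congrFun (matLA_mulVec_min hn j) i
  simp only [Pi.smul_apply, Pi.sub_apply, Pi.single_apply] at hcol
  simp only [Matrix.smul_apply, Matrix.sub_apply, one_apply, vecMulVec_apply, Pi.single_apply,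
    Pi.one_apply, mul_one]
  exact hcol

end

/-- The sum of the reciprocals of the nonzero eigenvalues of `L_A` equals `n(4n+2)/3`
(reciprocals taken in `ℝ` with `0⁻¹ = 0`; `L_A` has exactly one zero eigenvalue). -/
theorem sum_inv_eigenvalues_matLA (n : ℕ) (hn : 0 < n) (h : (matLA n).IsHermitian) :
    ∑ i, (h.eigenvalues i)⁻¹ = (n : ℝ) * (4 * n + 2) / 3 := by
  have hAK : matLA n * ((2 : ℝ)⁻¹ • minMatrix (4 * n + 1)) =
      1 - vecMulVec (Pi.single 0 1) 1 := by
    rw [Matrix.mul_smul, matLA_mul_minMatrix hn, smul_smul, inv_mul_cancel₀ two_ne_zero, one_smul]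
  have key := h.sum_inv_eigenvalues_eq_trace_sub (matLA_mulVec_one hn)
    (fun _ => matLA_mulVec_eq_zero hn) hAK
  rw [RCLike.ofReal_real_eq_id, id] at key
  have htr : (minMatrix (4 * n + 1)).trace = (4 * n + 1) * (4 * n) / 2 := by
    have := two_mul_trace_minMatrix (4 * n + 1)
    push_cast at this
    linear_combination this / 2
  have hsum : ∑ i, ∑ j, minMatrix (4 * n + 1) i j = 4 * n * (4 * n + 1) * (8 * n + 1) / 6 := by
    have := six_mul_sum_minMatrix (4 * n + 1)
    push_cast at this
    linear_combination this / 6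
  rw [key, trace_smul, smul_eq_mul]
  simp only [Matrix.smul_apply, smul_eq_mul, ← mul_sum, Fintype.card_fin, htr, hsum]
  push_cast
  field_simp
  ring
end

section
/- For every positive integer n, the Kirchhoff index of the linear crossed octagonal-quadrilateral network Q_n equals (32n^3 + 44n^2 + 17n + 2)/3. -/
/-- The linear crossed octagonal-quadrilateral network `Q_n`.
Vertices are `(s, i)` with `s : Fin 2` (the layer, unprimed/primed) and
`i : Fin (4*n+1)` (the position, 0-indexed).  Vertices at consecutive
positions are adjacent (in the same layer and across layers, giving the
crossed edges), and vertices at the same position in different layers are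
adjacent exactly at positions `i ≡ 0 (mod 4)` (vertices `4k+1` in the paper's
1-indexing) and `i ≡ 3 (mod 4)` (vertices `4k` in the paper's 1-indexing). -/
def crossedOctQuad (n : ℕ) : SimpleGraph (Fin 2 × Fin (4 * n + 1)) where
  Adj p q := (p.2.val + 1 = q.2.val ∨ q.2.val + 1 = p.2.val) ∨
    (p.2 = q.2 ∧ p.1 ≠ q.1 ∧ (p.2.val % 4 = 0 ∨ p.2.val % 4 = 3))
  symm := by
    constructor
    rintro ⟨s, i⟩ ⟨t, j⟩ (h | ⟨h1, h2, h3⟩)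
    · exact Or.inl h.symm
    · exact Or.inr ⟨h1.symm, h2.symm, h1 ▸ h3⟩
  loopless := by
    constructor
    rintro ⟨s, i⟩ (h | ⟨h1, h2, h3⟩)
    · omega
    · exact h2 rfl

instance (n : ℕ) : DecidableRel (crossedOctQuad n).Adj := fun p q =>
  inferInstanceAs (Decidable ((p.2.val + 1 = q.2.val ∨ q.2.val + 1 = p.2.val) ∨
    (p.2 = q.2 ∧ p.1 ≠ q.1 ∧ (p.2.val % 4 = 0 ∨ p.2.val % 4 = 3))))

/-!
Swapping the two layers is an automorphism of `Q_n`, so its Laplacian splits into a block on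
layer-symmetric vectors, which is twice the Laplacian of the path `P_{4n+1}`, and a block on
layer-antisymmetric vectors, which is diagonal with entries `2 (deg_P i + rung i)`. Hence the
Moore–Penrose inverse of `L(Q_n)` is assembled from an explicit Green's function of the path and
a diagonal matrix, and the sum of the reciprocal nonzero eigenvalues is its trace,
`((4n+1)^2 - 1) / 12 + (5n + 2) / 6`.
-/

open Matrix Finset SimpleGraph
open scoped Kronecker

theorem Matrix.IsHermitian.trace_eq_sum_of_mulVec_eigenvectorBasis {𝕜 n : Type*} [RCLike 𝕜]
    [Fintype n] [DecidableEq n] {A : Matrix n n 𝕜} (hA : A.IsHermitian) {M : Matrix n n 𝕜}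
    {c : n → 𝕜} (hM : ∀ j, M *ᵥ ⇑(hA.eigenvectorBasis j) = c j • ⇑(hA.eigenvectorBasis j)) :
    M.trace = ∑ j, c j := by
  set U : Matrix n n 𝕜 := ↑hA.eigenvectorUnitary
  have hMU : M * U = U * diagonal c := by
    ext i j
    rw [mul_diagonal, mul_comm]
    simpa [U, mul_apply, mulVec, dotProduct] using congrFun (hM j) i
  calc M.trace = (M * (U * star U)).trace := by
        rw [mem_unitaryGroup_iff.mp hA.eigenvectorUnitary.2, Matrix.mul_one]
    _ = (diagonal c * (star U * U)).trace := by
        rw [← Matrix.mul_assoc, hMU, Matrix.mul_assoc, trace_mul_comm, Matrix.mul_assoc]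
    _ = ∑ j, c j := by
        rw [mem_unitaryGroup_iff'.mp hA.eigenvectorUnitary.2, Matrix.mul_one, trace_diagonal]

namespace SimpleGraph

section Pseudoinverse

variable {V : Type*} [Fintype V] [DecidableEq V] {G : SimpleGraph V} [DecidableRel G.Adj]

theorem sum_eq_zero_of_lapMatrix_mulVec_eq_smul {u : V → ℝ} {μ : ℝ}
    (hu : G.lapMatrix ℝ *ᵥ u = μ • u) (hμ : μ ≠ 0) : ∑ v, u v = 0 := by
  have h : (fun _ ↦ (1 : ℝ)) ⬝ᵥ (G.lapMatrix ℝ *ᵥ u) = 0 := by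
    rw [dotProduct_mulVec, ← mulVec_transpose, (G.isSymm_lapMatrix ℝ).eq,
      lapMatrix_mulVec_const_eq_zero, zero_dotProduct]
  rw [hu, dotProduct_smul, smul_eq_mul, mul_eq_zero] at h
  simpa [dotProduct] using h.resolve_left hμ

theorem mulVec_eigenvectorBasis_of_mul_lapMatrix (hG : G.Connected)
    (h : (G.lapMatrix ℝ).IsHermitian) {M : Matrix V V ℝ}
    (hML : M * G.lapMatrix ℝ = 1 - (Fintype.card V : ℝ)⁻¹ • of fun _ _ ↦ 1)
    (hMJ : M * of (fun _ _ ↦ 1) = 0) (j : V) :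
    M *ᵥ ⇑(h.eigenvectorBasis j) = (h.eigenvalues j)⁻¹ • ⇑(h.eigenvectorBasis j) := by
  set u : V → ℝ := ⇑(h.eigenvectorBasis j)
  have heig : G.lapMatrix ℝ *ᵥ u = h.eigenvalues j • u := h.mulVec_eigenvectorBasis j
  by_cases hzero : h.eigenvalues j = 0
  · obtain ⟨a⟩ := hG.nonempty
    have hker : G.lapMatrix ℝ *ᵥ u = 0 := by rw [heig, hzero, zero_smul]
    have hconst : u = u a • fun _ ↦ 1 := funext fun b ↦ by
      simpa using (lapMatrix_mulVec_eq_zero_iff_forall_reachable G).mp hker b a (hG b a)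
    have hM1 : M *ᵥ (fun _ ↦ 1) = 0 := funext fun i ↦ by
      simpa [mul_apply, mulVec, dotProduct] using congrFun (congrFun hMJ i) a
    rw [hzero, _root_.inv_zero, zero_smul, hconst, mulVec_smul, hM1, smul_zero]
  · have hJu : (of fun _ _ ↦ (1 : ℝ) : Matrix V V ℝ) *ᵥ u = 0 := funext fun _ ↦ by
      simpa [mulVec, dotProduct] using sum_eq_zero_of_lapMatrix_mulVec_eq_smul heig hzero
    have hMLu : h.eigenvalues j • (M *ᵥ u) = u := by
      rw [← mulVec_smul, ← heig, mulVec_mulVec, hML, sub_mulVec, one_mulVec, smul_mulVec, hJu,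
        smul_zero, sub_zero]
    conv_rhs => rw [← hMLu]
    rw [smul_smul, inv_mul_cancel₀ hzero, one_smul]

theorem sum_inv_eigenvalues_lapMatrix_eq_trace (hG : G.Connected)
    (h : (G.lapMatrix ℝ).IsHermitian) {M : Matrix V V ℝ}
    (hML : M * G.lapMatrix ℝ = 1 - (Fintype.card V : ℝ)⁻¹ • of fun _ _ ↦ 1)
    (hMJ : M * of (fun _ _ ↦ 1) = 0) :
    ∑ j, (h.eigenvalues j)⁻¹ = M.trace :=
  (h.trace_eq_sum_of_mulVec_eigenvectorBasis
    (mulVec_eigenvectorBasis_of_mul_lapMatrix hG h hML hMJ)).symm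

end Pseudoinverse

instance (m : ℕ) : DecidableRel (pathGraph m).Adj := fun _ _ ↦ decidable_of_iff' _ pathGraph_adj

theorem sum_neighborFinset_pathGraph {R : Type*} [AddCommMonoid R] {m : ℕ} (f : ℕ → R)
    (k : Fin m) :
    ∑ j ∈ (pathGraph m).neighborFinset k, f j =
      (if 0 < k.val then f (k - 1) else 0) + (if k.val + 1 < m then f (k + 1) else 0) := by
  have hsplit : ∀ j : ℕ, (if k.val + 1 = j ∨ j + 1 = k.val then f j else 0) =
      (if k.val - 1 = j then (if 0 < k.val then f j else 0) else 0) +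
        (if k.val + 1 = j then f j else 0) := fun j ↦ by
    split_ifs <;> first | omega | simp
  rw [neighborFinset_eq_filter, sum_filter]
  simp only [pathGraph_adj]
  rw [Fin.sum_univ_eq_sum_range (fun j ↦ if k.val + 1 = j ∨ j + 1 = k.val then f j else 0),
    sum_congr rfl fun j _ ↦ hsplit j, sum_add_distrib, sum_ite_eq, sum_ite_eq]
  simp only [mem_range]
  rw [if_pos (by omega : k.val - 1 < m)]

theorem degree_pathGraph {m : ℕ} (k : Fin m) :
    (pathGraph m).degree k = (if 0 < k.val then 1 else 0) + (if k.val + 1 < m then 1 else 0) := by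
  rw [← card_neighborFinset_eq_degree, card_eq_sum_ones]
  exact sum_neighborFinset_pathGraph (fun _ ↦ 1) k

theorem lapMatrix_pathGraph_mulVec_apply {R : Type*} [NonAssocRing R] {m : ℕ} (f : ℕ → R)
    (k : Fin m) :
    ((pathGraph m).lapMatrix R *ᵥ fun j ↦ f j) k =
      (if 0 < k.val then f k - f (k - 1) else 0) + (if k.val + 1 < m then f k - f (k + 1) else 0) := by
  rw [lapMatrix_mulVec_apply, sum_neighborFinset_pathGraph, degree_pathGraph]
  push_cast
  split_ifs <;> simp only [add_mul, one_mul, zero_mul] <;> abel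

end SimpleGraph

/-- `6m` times the Moore–Penrose inverse of the Laplacian of `pathGraph m`. -/
def pathGreen (m : ℕ) (i j : ℤ) : ℤ :=
  3 * i ^ 2 + 3 * j ^ 2 - 3 * (m - 1) * (i + j) - 3 * m * |i - j| + 2 * m ^ 2 - 3 * m + 1

theorem pathGreen_sub_pred (m : ℕ) (i k : ℤ) :
    pathGreen m i k - pathGreen m i (k - 1) = 6 * k - if i < k then 6 * (m : ℤ) else 0 := by
  have habs : |i - k| - |i - (k - 1)| = if i < k then 1 else -1 := by
    split_ifs <;> simp only [abs_eq_max_neg] <;> omega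
  unfold pathGreen
  split_ifs at habs ⊢ <;> linear_combination (-3 * (m : ℤ)) * habs

theorem pathGreen_sub_succ (m : ℕ) (i k : ℤ) :
    pathGreen m i k - pathGreen m i (k + 1) = (if i ≤ k then 6 * (m : ℤ) else 0) - 6 * k - 6 := by
  have habs : |i - k| - |i - (k + 1)| = if i ≤ k then -1 else 1 := by
    split_ifs <;> simp only [abs_eq_max_neg] <;> omega
  unfold pathGreen
  split_ifs at habs ⊢ <;> linear_combination (-3 * (m : ℤ)) * habs

theorem pathGreen_laplacian {m i k : ℕ} (hi : i < m) (hk : k < m) :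
    (if 0 < k then pathGreen m i k - pathGreen m i ↑(k - 1) else 0) +
      (if k + 1 < m then pathGreen m i k - pathGreen m i ↑(k + 1) else 0) =
      (if i = k then 6 * (m : ℤ) else 0) - 6 := by
  have hpred : 0 < k → ((k - 1 : ℕ) : ℤ) = k - 1 := by omega
  split_ifs with h0 h1 <;> (try rw [hpred h0]) <;>
    push_cast [pathGreen_sub_pred, pathGreen_sub_succ] <;> (try split_ifs) <;> omega

theorem sum_range_abs_sub_mul_two {m i : ℕ} (h : i ≤ m) :
    (∑ j ∈ range m, |(i : ℤ) - j|) * 2 = i * (i + 1) + (m - 1 - i) * (m - i) := by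
  induction m generalizing i with
  | zero =>
    obtain rfl : i = 0 := by omega
    simp
  | succ m ih =>
    rcases Nat.lt_or_ge m i with hlt | hle
    · obtain rfl : i = m + 1 := by omega
      rw [sum_range_succ', add_mul]
      simp only [Nat.cast_add, Nat.cast_one, add_sub_add_right_eq_sub, CharP.cast_eq_zero,
        sub_zero]
      rw [ih le_rfl, abs_of_nonneg (by positivity)]
      ring
    · rw [sum_range_succ, add_mul, ih hle, abs_of_nonpos (by omega)]
      push_cast
      ring

theorem sum_range_quadratic_mul_six (a b c : ℤ) (k : ℕ) :
    (∑ j ∈ range k, (a * j ^ 2 + b * j + c)) * 6 =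
      a * k * (k - 1) * (2 * k - 1) + 3 * b * k * (k - 1) + 6 * c * k := by
  induction k with
  | zero => simp
  | succ k ih =>
    rw [sum_range_succ, add_mul, ih]
    push_cast
    ring

theorem sum_range_pathGreen {m i : ℕ} (hi : i ≤ m) : ∑ j ∈ range m, pathGreen m i j = 0 := by
  have hsplit : ∑ j ∈ range m, pathGreen m i j =
      ∑ j ∈ range m, (3 * (j : ℤ) ^ 2 + (-3 * (m - 1)) * j +
        (3 * i ^ 2 - 3 * (m - 1) * i + 2 * m ^ 2 - 3 * m + 1))
        - 3 * m * ∑ j ∈ range m, |(i : ℤ) - j| := by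
    rw [mul_sum, ← sum_sub_distrib]
    exact sum_congr rfl fun j _ ↦ by unfold pathGreen; ring
  have h6 : (∑ j ∈ range m, pathGreen m i j) * 6 = 0 := by
    rw [hsplit]
    linear_combination sum_range_quadratic_mul_six 3 (-3 * (m - 1))
      (3 * i ^ 2 - 3 * (m - 1) * i + 2 * m ^ 2 - 3 * m + 1) m -
      9 * (m : ℤ) * sum_range_abs_sub_mul_two hi
  omega

theorem sum_range_pathGreen_self (m : ℕ) :
    ∑ i ∈ range m, pathGreen m i i = m * (m ^ 2 - 1) := by
  have hdiag : ∑ i ∈ range m, pathGreen m i i =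
      ∑ i ∈ range m, (6 * (i : ℤ) ^ 2 + (-6 * (m - 1)) * i + (2 * m ^ 2 - 3 * m + 1)) :=
    sum_congr rfl fun i _ ↦ by simp only [pathGreen, sub_self, abs_zero]; ring
  apply mul_right_cancel₀ (by norm_num : (6 : ℤ) ≠ 0)
  rw [hdiag]
  linear_combination sum_range_quadratic_mul_six 6 (-6 * (m - 1)) (2 * m ^ 2 - 3 * m + 1) m

noncomputable def pathPinv (m : ℕ) : Matrix (Fin m) (Fin m) ℝ :=
  (6 * m : ℝ)⁻¹ • of fun (i j : Fin m) ↦ (pathGreen m (i : ℕ) (j : ℕ) : ℝ)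

theorem pathPinv_mul_lapMatrix {m : ℕ} (hm : 0 < m) :
    pathPinv m * (pathGraph m).lapMatrix ℝ = 1 - (m : ℝ)⁻¹ • of fun _ _ ↦ 1 := by
  ext i k
  have hrow : (pathPinv m * (pathGraph m).lapMatrix ℝ) i k = (6 * m : ℝ)⁻¹ *
      ((pathGraph m).lapMatrix ℝ *ᵥ fun j ↦ (pathGreen m (i : ℕ) (j : ℕ) : ℝ)) k := by
    rw [pathPinv, smul_mul, Matrix.smul_apply, smul_eq_mul, mul_apply, mulVec, dotProduct]
    simp only [of_apply, (isSymm_lapMatrix ℝ (pathGraph m)).apply k, mul_comm]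
  have key := congrArg (Int.cast : ℤ → ℝ) (pathGreen_laplacian i.isLt k.isLt)
  simp only [Int.cast_add, Int.cast_sub, Int.cast_ite, Int.cast_zero, Int.cast_mul,
    Int.cast_ofNat, Int.cast_natCast] at key
  rw [hrow, lapMatrix_pathGraph_mulVec_apply (fun j : ℕ ↦ (pathGreen m i j : ℝ)) k, key]
  have hm' : (m : ℝ) ≠ 0 := by positivity
  by_cases hik : i = k
  · simp [hik]
    field_simp
  · simp [hik, Fin.val_inj]

theorem pathPinv_mul_ones (m : ℕ) : pathPinv m * (of fun _ _ ↦ 1) = 0 := by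
  ext i k
  have hrow := congrArg (Int.cast : ℤ → ℝ) (sum_range_pathGreen i.isLt.le)
  push_cast at hrow
  rw [pathPinv, smul_mul, Matrix.smul_apply, mul_apply, Matrix.zero_apply]
  simp only [of_apply, mul_one]
  rw [Fin.sum_univ_eq_sum_range (fun j ↦ (pathGreen m i j : ℝ)), hrow, smul_zero]

theorem trace_pathPinv {m : ℕ} (hm : 0 < m) : (pathPinv m).trace = ((m : ℝ) ^ 2 - 1) / 6 := by
  have hdiag := congrArg (Int.cast : ℤ → ℝ) (sum_range_pathGreen_self m)
  push_cast at hdiag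
  rw [pathPinv, trace_smul, trace]
  simp only [diag_apply, of_apply]
  rw [Fin.sum_univ_eq_sum_range (fun i ↦ (pathGreen m i i : ℝ)), hdiag, smul_eq_mul]
  have hm' : (m : ℝ) ≠ 0 := by positivity
  field_simp

section TwoLayer

variable {ι : Type*}

/-- Acts as `2 • X` on layer-symmetric and as `2 • Y` on layer-antisymmetric vectors:
`!![1, 1; 1, 1]` and `!![1, -1; -1, 1]` are twice the two complementary projections. -/
def twoLayer (X Y : Matrix ι ι ℝ) : Matrix (Fin 2 × ι) (Fin 2 × ι) ℝ :=
  !![(1 : ℝ), 1; 1, 1] ⊗ₖ X + !![(1 : ℝ), -1; -1, 1] ⊗ₖ Y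

theorem twoLayer_apply (X Y : Matrix ι ι ℝ) (s t : Fin 2) (i j : ι) :
    twoLayer X Y (s, i) (t, j) = X i j + (if s = t then 1 else -1) * Y i j := by
  fin_cases s <;> fin_cases t <;> simp [twoLayer]

variable [Fintype ι]

theorem twoLayer_mul_twoLayer (X Y A B : Matrix ι ι ℝ) :
    twoLayer X Y * twoLayer A B = (2 : ℝ) • twoLayer (X * A) (Y * B) := by
  simp only [twoLayer, add_mul, mul_add, ← mul_kronecker_mul, mul_fin_two]
  ext ⟨s, i⟩ ⟨t, j⟩
  fin_cases s <;> fin_cases t <;> simp <;> ring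

theorem trace_twoLayer (X Y : Matrix ι ι ℝ) :
    (twoLayer X Y).trace = 2 * (X.trace + Y.trace) := by
  simp [twoLayer, trace_kronecker, trace_fin_two]
  ring

theorem twoLayer_mul_ones {X Y : Matrix ι ι ℝ} (hX : X * of (fun _ _ ↦ 1) = 0) :
    twoLayer X Y * of (fun _ _ ↦ 1) = 0 := by
  have hJ : (of fun _ _ ↦ 1 : Matrix (Fin 2 × ι) (Fin 2 × ι) ℝ) = twoLayer (of fun _ _ ↦ 1) 0 := by
    ext ⟨s, i⟩ ⟨t, j⟩
    fin_cases s <;> fin_cases t <;> norm_num [twoLayer_apply]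
  rw [hJ, twoLayer_mul_twoLayer, hX, Matrix.mul_zero]
  ext ⟨s, i⟩ ⟨t, j⟩
  simp [twoLayer_apply]

theorem smul_twoLayer_mul_twoLayer_eq_one_sub [DecidableEq ι] {X Y A B : Matrix ι ι ℝ}
    (hXA : X * A = 1 - (Fintype.card ι : ℝ)⁻¹ • of fun _ _ ↦ 1) (hYB : Y * B = 1) :
    (4⁻¹ : ℝ) • twoLayer X Y * twoLayer A B =
      1 - (Fintype.card (Fin 2 × ι) : ℝ)⁻¹ • of fun _ _ ↦ 1 := by
  ext ⟨s, i⟩ ⟨t, j⟩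
  rw [smul_mul, twoLayer_mul_twoLayer, smul_smul, Matrix.smul_apply, twoLayer_apply, hXA, hYB]
  fin_cases s <;> fin_cases t <;> by_cases hij : i = j <;> simp [one_apply, hij] <;> ring

end TwoLayer

def rung (i : ℕ) : ℝ := if i % 4 = 0 ∨ i % 4 = 3 then 1 else 0

theorem crossedOctQuad_connected (n : ℕ) : (crossedOctQuad n).Connected := by
  have hreach : ∀ (k : ℕ) (hk : k < 4 * n + 1) (s : Fin 2),
      (crossedOctQuad n).Reachable (0, 0) (s, ⟨k, hk⟩) := by
    intro k
    induction k with
    | zero =>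
      intro hk s
      fin_cases s
      · rfl
      · exact Adj.reachable (Or.inr ⟨rfl, Fin.zero_ne_one, Or.inl rfl⟩)
    | succ k ih =>
      exact fun hk s ↦ (ih (by omega) 0).trans (Adj.reachable (Or.inl (Or.inl rfl)))
  exact ⟨fun ⟨s, i⟩ ⟨t, j⟩ ↦ (hreach i i.isLt s).symm.trans (hreach j j.isLt t)⟩

theorem degree_crossedOctQuad (n : ℕ) (s : Fin 2) (i : Fin (4 * n + 1)) :
    ((crossedOctQuad n).degree (s, i) : ℝ) = 2 * (pathGraph (4 * n + 1)).degree i + rung i := by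
  have hadj : ∀ u y, (if (crossedOctQuad n).Adj (s, i) (u, y) then (1 : ℝ) else 0) =
      (if (pathGraph (4 * n + 1)).Adj i y then 1 else 0) + if i = y ∧ s ≠ u then rung i else 0 := by
    intro u y
    simp only [crossedOctQuad, pathGraph_adj, rung, Fin.ext_iff]
    split_ifs <;> first | omega | norm_num
  rw [degree_eq_sum_if_adj, degree_eq_sum_if_adj, Fintype.sum_prod_type, Fin.sum_univ_two]
  simp only [hadj, sum_add_distrib]
  fin_cases s <;> simp <;> ring

theorem lapMatrix_crossedOctQuad (n : ℕ) :
    (crossedOctQuad n).lapMatrix ℝ = twoLayer ((pathGraph (4 * n + 1)).lapMatrix ℝ)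
      (diagonal fun i ↦ (pathGraph (4 * n + 1)).degree i + rung i) := by
  ext ⟨s, i⟩ ⟨t, j⟩
  rw [twoLayer_apply, lapMatrix, lapMatrix, Matrix.sub_apply, Matrix.sub_apply, degMatrix,
    degMatrix, diagonal_apply, diagonal_apply, diagonal_apply, adjMatrix_apply, adjMatrix_apply,
    degree_crossedOctQuad]
  by_cases hij : i = j
  · subst hij
    fin_cases s <;> fin_cases t <;> simp [crossedOctQuad, rung] <;> ring
  · simp [hij, crossedOctQuad, pathGraph_adj]

theorem degree_pathGraph_add_rung_pos {m : ℕ} (i : Fin m) :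
    0 < ((pathGraph m).degree i : ℝ) + rung i := by
  rw [degree_pathGraph, rung]
  split_ifs <;> first | omega | norm_num

theorem inv_degree_add_rung {n : ℕ} (hn : 0 < n) (i : Fin (4 * n + 1)) :
    (((pathGraph (4 * n + 1)).degree i : ℝ) + rung i)⁻¹ =
      (if i.val % 4 = 1 ∨ i.val % 4 = 2 then 1 / 2 else 1 / 3) +
        (if i.val = 0 then 1 / 6 else 0) + (if i.val = 4 * n then 1 / 6 else 0) := by
  have hi := i.isLt
  rw [degree_pathGraph, rung]
  split_ifs <;> first | omega | norm_num

theorem sum_range_ite_mod_four (n : ℕ) :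
    ∑ i ∈ range (4 * n + 1), (if i % 4 = 1 ∨ i % 4 = 2 then (1 : ℝ) / 2 else 1 / 3) =
      (5 * n + 1) / 3 := by
  induction n with
  | zero => norm_num
  | succ n ih =>
    rw [show 4 * (n + 1) + 1 = 4 * n + 1 + 1 + 1 + 1 + 1 by ring]
    simp only [sum_range_succ, ih]
    rw [if_pos (by omega), if_pos (by omega), if_neg (by omega), if_neg (by omega)]
    push_cast
    ring

theorem sum_inv_degree_add_rung {n : ℕ} (hn : 0 < n) :
    ∑ i : Fin (4 * n + 1), (((pathGraph (4 * n + 1)).degree i : ℝ) + rung i)⁻¹ =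
      (5 * n + 2) / 3 := by
  simp only [inv_degree_add_rung hn]
  rw [Fin.sum_univ_eq_sum_range (fun i ↦ (if i % 4 = 1 ∨ i % 4 = 2 then (1 : ℝ) / 2 else 1 / 3) +
        (if i = 0 then 1 / 6 else 0) + (if i = 4 * n then 1 / 6 else 0)),
    sum_add_distrib, sum_add_distrib, sum_range_ite_mod_four, sum_ite_eq', sum_ite_eq']
  simp
  ring

/-- The sum runs over all Laplacian eigenvalues: the single zero eigenvalue contributes
`0⁻¹ = 0`. -/
theorem kirchhoff_crossedOctQuad (n : ℕ) (hn : 0 < n)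
    (h : ((crossedOctQuad n).lapMatrix ℝ).IsHermitian) :
    (8 * (n : ℝ) + 2) * ∑ i, (h.eigenvalues i)⁻¹
      = (32 * (n : ℝ) ^ 3 + 44 * n ^ 2 + 17 * n + 2) / 3 := by
  set d : Fin (4 * n + 1) → ℝ := fun i ↦ (pathGraph (4 * n + 1)).degree i + rung i
  have hdiag : diagonal d⁻¹ * diagonal d = 1 := by
    rw [diagonal_mul_diagonal, ← diagonal_one]
    exact congrArg diagonal (funext fun i ↦ inv_mul_cancel₀ (degree_pathGraph_add_rung_pos i).ne')
  have hML := smul_twoLayer_mul_twoLayer_eq_one_sub (X := pathPinv _)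
    (A := (pathGraph (4 * n + 1)).lapMatrix ℝ)
    (by rw [Fintype.card_fin]; exact pathPinv_mul_lapMatrix (by omega)) hdiag
  rw [← lapMatrix_crossedOctQuad] at hML
  have hMJ := twoLayer_mul_ones (Y := diagonal d⁻¹) (pathPinv_mul_ones (4 * n + 1))
  rw [sum_inv_eigenvalues_lapMatrix_eq_trace (crossedOctQuad_connected n) h hML
      (by rw [smul_mul, hMJ, smul_zero]),
    trace_smul, trace_twoLayer, trace_pathPinv (by omega), trace_diagonal]
  simp only [Pi.inv_apply, d, sum_inv_degree_add_rung hn]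
  push_cast
  ring
end

section
/- Let sequences (x_i) satisfy x_0=1, x_1=2/3, x_2=1/3, x_3=1/6, and for 1 ≤ k ≤ n-1: x_{4k} = (4/5)x_{4k-1} - (1/5)x_{4k-2}, x_{4k+1} = (4/5)x_{4k} - (4/25)x_{4k-1}, x_{4k+2} = x_{4k+1} - (1/5)x_{4k}, x_{4k+3} = x_{4k+2} - (1/4)x_{4k+1}. Then x_{4k} = (5/3)(1/25)^k, x_{4k+1} = (2/3)(1/25)^k, x_{4k+2} = (1/3)(1/25)^k, and x_{4k+3} = (1/6)(1/25)^k for all 1 ≤ k ≤ n-1. -/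
/-- Closed form for the leading principal minors `x_i` of the normalized-Laplacian-derived
matrix `𝓛_A` of the linear crossed octagonal-quadrilateral network `Q_n`. -/
theorem x_closed_form (n : ℕ) (x : ℕ → ℚ)
    (h0 : x 0 = 1) (h1 : x 1 = 2 / 3) (h2 : x 2 = 1 / 3) (h3 : x 3 = 1 / 6)
    (hrec : ∀ k, 1 ≤ k → k ≤ n - 1 →
      x (4 * k) = 4 / 5 * x (4 * k - 1) - 1 / 5 * x (4 * k - 2) ∧
      x (4 * k + 1) = 4 / 5 * x (4 * k) - 4 / 25 * x (4 * k - 1) ∧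
      x (4 * k + 2) = x (4 * k + 1) - 1 / 5 * x (4 * k) ∧
      x (4 * k + 3) = x (4 * k + 2) - 1 / 4 * x (4 * k + 1)) :
    ∀ k, 1 ≤ k → k ≤ n - 1 →
      x (4 * k) = 5 / 3 * (1 / 25) ^ k ∧
      x (4 * k + 1) = 2 / 3 * (1 / 25) ^ k ∧
      x (4 * k + 2) = 1 / 3 * (1 / 25) ^ k ∧
      x (4 * k + 3) = 1 / 6 * (1 / 25) ^ k := by
  intro k
  induction k with
  | zero => intro h; omega
  | succ m ih =>
    intro _ hle
    obtain ⟨r0, r1, r2, r3⟩ := hrec (m + 1) (by omega) hle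
    have e1 : 4 * (m + 1) - 1 = 4 * m + 3 := by omega
    have e2 : 4 * (m + 1) - 2 = 4 * m + 2 := by omega
    rw [e1] at r0 r1; rw [e2] at r0
    have hprev : x (4 * m + 2) = 1 / 3 * (1 / 25) ^ m ∧
        x (4 * m + 3) = 1 / 6 * (1 / 25) ^ m := by
      rcases Nat.eq_zero_or_pos m with hm | hm
      · subst hm; simp only [Nat.mul_zero, Nat.zero_add, pow_zero, mul_one]; exact ⟨h2, h3⟩
      · obtain ⟨_, _, p2, p3⟩ := ih hm (le_trans (Nat.le_succ m) hle)
        exact ⟨p2, p3⟩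
    obtain ⟨p2, p3⟩ := hprev
    have q0 : x (4 * (m + 1)) = 5 / 3 * (1 / 25) ^ (m + 1) := by
      rw [r0, p2, p3]; ring
    have q1 : x (4 * (m + 1) + 1) = 2 / 3 * (1 / 25) ^ (m + 1) := by
      rw [r1, q0, p3]; ring
    have q2 : x (4 * (m + 1) + 2) = 1 / 3 * (1 / 25) ^ (m + 1) := by
      rw [r2, q1, q0]; ring
    have q3 : x (4 * (m + 1) + 3) = 1 / 6 * (1 / 25) ^ (m + 1) := by
      rw [r3, q2, q1]; ring
    exact ⟨q0, q1, q2, q3⟩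
end

section
/- Let sequences (y_i) satisfy y_0=1, y_1=2/3, y_2=4/15, y_3=2/15, and for 1 ≤ k ≤ n-1: y_{4k} = y_{4k-1} - (1/4)y_{4k-2}, y_{4k+1} = (4/5)y_{4k} - (1/5)y_{4k-1}, y_{4k+2} = (4/5)y_{4k+1} - (4/25)y_{4k}, y_{4k+3} = y_{4k+2} - (1/5)y_{4k+1}. Then y_{4k} = (5/3)(1/25)^k, y_{4k+1} = (2/3)(1/25)^k, y_{4k+2} = (4/15)(1/25)^k, and y_{4k+3} = (2/15)(1/25)^k for all 1 ≤ k ≤ n-1. -/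
/-- Closed form for the trailing principal minors `y_i` of the normalized-Laplacian-derived
matrix `𝓛_A` of the linear crossed octagonal-quadrilateral network `Q_n`. -/
theorem y_closed_form (n : ℕ) (y : ℕ → ℚ)
    (h0 : y 0 = 1) (h1 : y 1 = 2 / 3) (h2 : y 2 = 4 / 15) (h3 : y 3 = 2 / 15)
    (hrec : ∀ k, 1 ≤ k → k ≤ n - 1 →
      y (4 * k) = y (4 * k - 1) - 1 / 4 * y (4 * k - 2) ∧
      y (4 * k + 1) = 4 / 5 * y (4 * k) - 1 / 5 * y (4 * k - 1) ∧
      y (4 * k + 2) = 4 / 5 * y (4 * k + 1) - 4 / 25 * y (4 * k) ∧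
      y (4 * k + 3) = y (4 * k + 2) - 1 / 5 * y (4 * k + 1)) :
    ∀ k, 1 ≤ k → k ≤ n - 1 →
      y (4 * k) = 5 / 3 * (1 / 25) ^ k ∧
      y (4 * k + 1) = 2 / 3 * (1 / 25) ^ k ∧
      y (4 * k + 2) = 4 / 15 * (1 / 25) ^ k ∧
      y (4 * k + 3) = 2 / 15 * (1 / 25) ^ k := by
  intro k
  induction k with
  | zero => intro h; omega
  | succ m ih =>
    intro _ hle
    rcases Nat.eq_zero_or_pos m with hm | hm
    · subst hm
      obtain ⟨r0, r1, r2, r3⟩ := hrec 1 le_rfl hle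
      norm_num at r0 r1 r2 r3 ⊢
      have v0 : y 4 = 1 / 15 := by rw [r0, h2, h3]; norm_num
      have v1 : y 5 = 2 / 75 := by rw [r1, v0, h3]; norm_num
      have v2 : y 6 = 4 / 375 := by rw [r2, v1, v0]; norm_num
      have v3 : y 7 = 2 / 375 := by rw [r3, v2, v1]; norm_num
      exact ⟨by rw [v0], by rw [v1], by rw [v2], by rw [v3]⟩
    · obtain ⟨i0, i1, i2, i3⟩ := ih hm (by omega)
      obtain ⟨r0, r1, r2, r3⟩ := hrec (m + 1) (by omega) hle
      have e1 : 4 * (m + 1) - 1 = 4 * m + 3 := by omega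
      have e2 : 4 * (m + 1) - 2 = 4 * m + 2 := by omega
      rw [e1, e2] at r0
      rw [e1] at r1
      have v0 : y (4 * (m + 1)) = 5 / 3 * (1 / 25) ^ (m + 1) := by
        rw [r0, i2, i3]; ring
      have v1 : y (4 * (m + 1) + 1) = 2 / 3 * (1 / 25) ^ (m + 1) := by
        rw [r1, v0, i3]; ring
      have v2 : y (4 * (m + 1) + 2) = 4 / 15 * (1 / 25) ^ (m + 1) := by
        rw [r2, v1, v0]; ring
      have v3 : y (4 * (m + 1) + 3) = 2 / 15 * (1 / 25) ^ (m + 1) := by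
        rw [r3, v2, v1]; ring
      exact ⟨v0, v1, v2, v3⟩
end

section
/- For every positive integer n, Σ_{1≤a<b≤n} (1/6)(1/25)^{a-1}·(2/3)(1/25)^{n-b}·(2/5)(b-a)(1/25)^{b-a-1} = (5(n^3-n)/27)(1/25)^{n-1}. -/
/-! Every summand has total exponent `(a - 1) + (n - b) + (b - a - 1) = n - 2`, so the sum is
`(2/45) (1/25)^(n-2) ∑_{1 ≤ a < b ≤ n} (b - a)`, and `∑_{1 ≤ a < b ≤ n} (b - a) = (n³ - n)/6`. -/

open Finset

lemma sum_Icc_one_natCast (m : ℕ) : ∑ a ∈ Icc 1 m, (a : ℚ) = m * (m + 1) / 2 := by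
  induction m with
  | zero => simp
  | succ m ih =>
    rw [sum_Icc_succ_top (by omega), ih]
    push_cast
    ring

lemma sum_Icc_one_sub (b : ℕ) : ∑ a ∈ Icc 1 (b - 1), ((b : ℚ) - a) = b * (b - 1) / 2 := by
  rcases b with _ | m
  · simp
  · rw [Nat.add_sub_cancel, sum_sub_distrib, sum_const, Nat.card_Icc, sum_Icc_one_natCast,
      nsmul_eq_mul]
    push_cast
    ring

lemma sum_Icc_one_sum_Icc_one_sub (n : ℕ) :
    ∑ b ∈ Icc 1 n, ∑ a ∈ Icc 1 (b - 1), ((b : ℚ) - a) = ((n : ℚ) ^ 3 - n) / 6 := by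
  induction n with
  | zero => simp
  | succ n ih =>
    rw [sum_Icc_succ_top (by omega), ih, sum_Icc_one_sub]
    push_cast
    ring

theorem K00_identity_general (n : ℕ) :
    ∑ b ∈ Finset.Icc 1 n, ∑ a ∈ Finset.Icc 1 (b - 1),
        (1 / 6 : ℚ) * (1 / 25) ^ (a - 1) * (2 / 3 * (1 / 25) ^ (n - b)) *
          (2 / 5 * ((b : ℚ) - a) * (1 / 25) ^ (b - a - 1))
      = 5 * ((n : ℚ) ^ 3 - n) / 27 * (1 / 25) ^ (n - 1) := by
  have summand_eq : ∀ b ∈ Icc 1 n, ∀ a ∈ Icc 1 (b - 1),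
      (1 / 6 : ℚ) * (1 / 25) ^ (a - 1) * (2 / 3 * (1 / 25) ^ (n - b)) *
          (2 / 5 * ((b : ℚ) - a) * (1 / 25) ^ (b - a - 1))
        = 2 / 45 * (1 / 25) ^ (n - 2) * ((b : ℚ) - a) := by
    intro b hb a ha
    rw [mem_Icc] at hb ha
    rw [show n - 2 = (a - 1) + (n - b) + (b - a - 1) by omega, pow_add, pow_add]
    ring
  rw [sum_congr rfl fun b hb => sum_congr rfl (summand_eq b hb)]
  simp_rw [← mul_sum]
  rw [sum_Icc_one_sum_Icc_one_sub]
  rcases n with _ | _ | n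
  · simp
  · simp
  · rw [show n + 2 - 1 = n + 2 - 2 + 1 by omega, pow_succ]
    push_cast
    ring

/-- `K_{0,0} = ∑_{1 ≤ a < b ≤ n} (1/6)(1/25)^{a-1} · (2/3)(1/25)^{n-b} · (2/5)(b-a)(1/25)^{b-a-1}
    = (5(n³-n)/27)(1/25)^{n-1}`. -/
theorem K00_identity (n : ℕ) (hn : 0 < n) :
    ∑ b ∈ Finset.Icc 1 n, ∑ a ∈ Finset.Icc 1 (b - 1),
        (1 / 6 : ℚ) * (1 / 25) ^ (a - 1) * (2 / 3 * (1 / 25) ^ (n - b)) *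
          (2 / 5 * ((b : ℚ) - a) * (1 / 25) ^ (b - a - 1))
      = 5 * ((n : ℚ) ^ 3 - n) / 27 * (1 / 25) ^ (n - 1) :=
  K00_identity_general n
end

section
/- For every positive integer n, Σ_{1≤a≤b≤n-1} (1/6)(1/25)^{a-1}·(5/3)(1/25)^{n-b}·(4b-4a+1)(1/25)^{b-a} + Σ_{a=1}^{n} (1/6)(1/25)^{a-1}·(4n-4a+1)(1/25)^{n-a} = ((20n^3-9n^2+7n)/108)(1/25)^{n-1}. -/
/-! In every summand the exponents of `1/25` add up to `(a-1) + (n-b) + (b-a) = n-1`, so the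
geometric weights factor out of both sums and only the polynomial sums
`∑_{a ≤ b} (4b - 4a + 1) = 2b² - b` and `∑_{b ≤ m} (2b² - b) = m(m+1)(4m-1)/6` remain. -/

open Finset

section PolynomialSums

variable {R : Type*} [CommRing R]

theorem sum_Icc_one_natCast_mul_two (b : ℕ) : (∑ a ∈ Icc 1 b, (a : R)) * 2 = b * (b + 1) := by
  induction b with
  | zero => simp
  | succ m ih =>
    rw [sum_Icc_succ_top (by omega), add_mul, ih]
    push_cast
    ring

theorem sum_Icc_four_mul_sub_four_mul_add_one (b : ℕ) :
    ∑ a ∈ Icc 1 b, (4 * (b : R) - 4 * a + 1) = 2 * b ^ 2 - b := by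
  simp only [sum_add_distrib, sum_sub_distrib, ← mul_sum, sum_const, Nat.card_Icc,
    add_tsub_cancel_right, nsmul_eq_mul, mul_one]
  linear_combination (-2 : R) * sum_Icc_one_natCast_mul_two (R := R) b

theorem sum_Icc_two_mul_sq_sub_mul_six (m : ℕ) :
    (∑ b ∈ Icc 1 m, (2 * (b : R) ^ 2 - b)) * 6 = (m : R) * (m + 1) * (4 * m - 1) := by
  induction m with
  | zero => simp
  | succ k ih =>
    rw [sum_Icc_succ_top (by omega), add_mul, ih]
    push_cast
    ring

end PolynomialSums

section Exponents

variable {M : Type*} [Monoid M] (x : M) {a b n : ℕ}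

theorem pow_sub_one_mul_pow_sub (ha : 1 ≤ a) (han : a ≤ n) :
    x ^ (a - 1) * x ^ (n - a) = x ^ (n - 1) := by
  rw [← pow_add]
  congr 1
  omega

theorem pow_sub_one_mul_pow_sub_mul_pow_sub (ha : 1 ≤ a) (hab : a ≤ b) (hbn : b ≤ n) :
    x ^ (a - 1) * x ^ (n - b) * x ^ (b - a) = x ^ (n - 1) := by
  rw [← pow_add, ← pow_add]
  congr 1
  omega

end Exponents

/-- `K_{0,1} = ∑_{1 ≤ a ≤ b ≤ n-1} (1/6)(1/25)^{a-1}·(5/3)(1/25)^{n-b}·(4b-4a+1)(1/25)^{b-a}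
    + ∑_{a=1}^{n} (1/6)(1/25)^{a-1}·(4n-4a+1)(1/25)^{n-a} = ((20n³-9n²+7n)/108)(1/25)^{n-1}`. -/
theorem K01_identity (n : ℕ) (hn : 0 < n) :
    (∑ b ∈ Finset.Icc 1 (n - 1), ∑ a ∈ Finset.Icc 1 b,
        (1 / 6 : ℚ) * (1 / 25) ^ (a - 1) * (5 / 3 * (1 / 25) ^ (n - b)) *
          ((4 * (b : ℚ) - 4 * a + 1) * (1 / 25) ^ (b - a)))
      + ∑ a ∈ Finset.Icc 1 n,
        (1 / 6 : ℚ) * (1 / 25) ^ (a - 1) * ((4 * (n : ℚ) - 4 * a + 1) * (1 / 25) ^ (n - a))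
      = (20 * (n : ℚ) ^ 3 - 9 * n ^ 2 + 7 * n) / 108 * (1 / 25) ^ (n - 1) := by
  set x : ℚ := 1 / 25
  have double_summand : ∀ b ∈ Icc 1 (n - 1), ∀ a ∈ Icc 1 b,
      1 / 6 * x ^ (a - 1) * (5 / 3 * x ^ (n - b)) * ((4 * (b : ℚ) - 4 * a + 1) * x ^ (b - a))
        = 5 / 18 * x ^ (n - 1) * (4 * (b : ℚ) - 4 * a + 1) := by
    intro b hb a ha
    rw [mem_Icc] at hb ha
    rw [← pow_sub_one_mul_pow_sub_mul_pow_sub x ha.1 ha.2 (by omega : b ≤ n)]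
    ring
  have single_summand : ∀ a ∈ Icc 1 n,
      1 / 6 * x ^ (a - 1) * ((4 * (n : ℚ) - 4 * a + 1) * x ^ (n - a))
        = 1 / 6 * x ^ (n - 1) * (4 * (n : ℚ) - 4 * a + 1) := by
    intro a ha
    rw [mem_Icc] at ha
    rw [← pow_sub_one_mul_pow_sub x ha.1 ha.2]
    ring
  rw [sum_congr rfl fun b hb => sum_congr rfl (double_summand b hb), sum_congr rfl single_summand]
  simp only [← mul_sum, sum_Icc_four_mul_sub_four_mul_add_one]
  obtain ⟨m, rfl⟩ : ∃ m, n = m + 1 := ⟨n - 1, by omega⟩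
  simp only [add_tsub_cancel_right]
  push_cast
  linear_combination 5 / 108 * x ^ m * sum_Icc_two_mul_sq_sub_mul_six (R := ℚ) m
end
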